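/- arXiv:1405.7566 — 4 statements merged into one kernel-verified Lean document; each statement's English description precedes it below -/
import Mathlib

section
/- Let n ∈ ℕ, let φ be a Borel-measurable bijection from [0,n)^d onto [0,1) with Borel-measurable inverse, let μ be a diffuse (atomless) probability measure on [0,n)^d, let F_μ(x) := μ(φ ≤ x), and let F_μ^{-1} be a (left- or right-continuous) generalized inverse of F_μ. For r ∈ [0,1), define ψ_r^μ : [0,n)^d → [0,n)^d by ψ_r^μ := φ^{-1}(F_μ^{-1}(F_μ(φ(·)) + r mod 1)). Then the pushforward of μ under ψ_r^μ equals μ. -/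
open MeasureTheory ENNReal Set

namespace LT

/-- Points of `ℝ^d`. -/
abbrev Rd (d : ℕ) := Fin d → ℝ

/-- Points of `ℤ^d`. -/
abbrev ZZd (d : ℕ) := Fin d → ℤ

/-- The shift `θ_t ξ`, satisfying `θ_t ξ (B) = ξ (B + t)`. -/
noncomputable def shiftM {d : ℕ} (t : Rd d) (ξ : Measure (Rd d)) : Measure (Rd d) :=
  Measure.map (fun x => x - t) ξ

/-- A (jointly) measurable action of the additive group `ℝ^d` on a measurable space `E`,
written `θ_t x = act t x`. -/
structure Action (d : ℕ) (E : Type*) [MeasurableSpace E] where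
  act : Rd d → E → E
  measurable_act : ∀ t, Measurable (act t)
  act_zero : ∀ x, act 0 x = x
  act_add : ∀ s t x, act s (act t x) = act (s + t) x

/-- The conditional (normalized) measure `ξ(· | A)`. -/
noncomputable def condM {d : ℕ} (ξ : Measure (Rd d)) (A : Set (Rd d)) : Measure (Rd d) :=
  (ξ A)⁻¹ • ξ.restrict A

/-- `0` lies in the support of `ξ`. -/
def zeroInSupport {d : ℕ} (ξ : Measure (Rd d)) : Prop :=
  ∀ U : Set (Rd d), IsOpen U → (0 : Rd d) ∈ U → 0 < ξ U

variable {d : ℕ} {Ω E : Type*} [MeasurableSpace Ω] [MeasurableSpace E]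

/-- The defining identity (1) of mass-stationarity for a fixed set `C` :
`(θ_{V_C}(X,ξ), V_C + U_C) =_D ((X,ξ), U_C)`, where the conditional distribution of `U_C`
given `(X,ξ)` is uniform on `C` and that of `V_C` given `((X,ξ),U_C)` is `ξ(· | C - U_C)`. -/
def MSIdentity (Θ : Action d E) (P : Measure Ω) (X : Ω → E) (ξ : Ω → Measure (Rd d))
    (C : Set (Rd d)) : Prop :=
  ∀ f : (E × Measure (Rd d)) × Rd d → ℝ≥0∞, Measurable f →
    ∫⁻ ω, (volume C)⁻¹ * ∫⁻ u in C,
        ∫⁻ v, f ((Θ.act v (X ω), shiftM v (ξ ω)), v + u)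
          ∂(condM (ξ ω) ((· + u) ⁻¹' C)) ∂volume ∂P
    = ∫⁻ ω, (volume C)⁻¹ * ∫⁻ u in C, f ((X ω, ξ ω), u) ∂volume ∂P

/-- Mass-stationarity of `(X, ξ)` under `P`. -/
def IsMassStationary (Θ : Action d E) (P : Measure Ω) (X : Ω → E)
    (ξ : Ω → Measure (Rd d)) : Prop :=
  ∀ C : Set (Rd d), MeasurableSet C → Bornology.IsBounded C → 0 < volume C →
    volume (frontier C) = 0 → MSIdentity Θ P X ξ C

/-- Stationarity of the pair `(X, ξ)` under `P`. -/
def IsStationary (Θ : Action d E) (P : Measure Ω) (X : Ω → E)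
    (ξ : Ω → Measure (Rd d)) : Prop :=
  ∀ t : Rd d, Measure.map (fun ω => (Θ.act t (X ω), shiftM t (ξ ω))) P
    = Measure.map (fun ω => (X ω, ξ ω)) P

/-- Stationarity of a random element `X` under `P`. -/
def IsStationaryElem (Θ : Action d E) (P : Measure Ω) (X : Ω → E) : Prop :=
  ∀ t : Rd d, Measure.map (fun ω => Θ.act t (X ω)) P = Measure.map X P

/-- `(Xc, ξc)` under `Pc` is the Palm version of the (stationary) pair `(X, ξ)` under `P`. -/
def IsPalmVersion {Ω' : Type*} [MeasurableSpace Ω']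
    (Θ : Action d E) (Pc : Measure Ω) (Xc : Ω → E) (ξc : Ω → Measure (Rd d))
    (P : Measure Ω') (X : Ω' → E) (ξ : Ω' → Measure (Rd d)) : Prop :=
  ∀ f : E × Measure (Rd d) → ℝ≥0∞, Measurable f →
    ∀ B : Set (Rd d), MeasurableSet B → 0 < volume B → volume B < ⊤ →
      ∫⁻ ω, f (Xc ω, ξc ω) ∂Pc
        = (volume B)⁻¹ * ∫⁻ ω, ∫⁻ t in B, f (Θ.act t (X ω), shiftM t (ξ ω)) ∂(ξ ω) ∂P

end LT
namespace LT

/-- Lexicographic order on `ℤ^d` (with the index order of `Fin d`). -/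
def lexLE {d : ℕ} (a b : ZZd d) : Prop :=
  a = b ∨ ∃ k : Fin d, a k < b k ∧ ∀ l, l < k → a l = b l

/-- The half-open unit cube `i + [0,1)^d` based at `i ∈ ℤ^d`. -/
def cube {d : ℕ} (i : ZZd d) : Set (Rd d) :=
  {x | ∀ k, (i k : ℝ) ≤ x k ∧ x k < (i k : ℝ) + 1}

/-- The half-open box `[0,n)^d`. -/
def boxN (d n : ℕ) : Set (Rd d) := {x | ∀ k, 0 ≤ x k ∧ x k < (n : ℝ)}

/-- The half-open unit box `[0,1)^d`. -/
def box01 (d : ℕ) : Set (Rd d) := boxN d 1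

/-- The simple point process on `ℤ^d` having a point at `i` iff `ξ(i + [0,1)^d) > 0`. -/
def Npts {d : ℕ} (ξ : Measure (Rd d)) : Set (ZZd d) := {i | 0 < ξ (cube i)}

/-- Squared Euclidean distance on `ℤ^d`. -/
def sqdist {d : ℕ} (i j : ZZd d) : ℤ := ∑ k, (i k - j k) ^ 2

open Classical in
/-- The point of `N ⊆ ℤ^d` closest to `i`, the lexicographically lowest one in case of
ties (junk value `i` if no such point exists, e.g. if `N = ∅`). -/
noncomputable def voronoiCenter {d : ℕ} (N : Set (ZZd d)) (i : ZZd d) : ZZd d :=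
  if h : ∃ j, j ∈ N ∧ (∀ j' ∈ N, sqdist i j ≤ sqdist i j') ∧
      (∀ j' ∈ N, sqdist i j' = sqdist i j → lexLE j j') then h.choose else i

/-- The Voronoi cell (w.r.t. `N`) containing the origin of `ℤ^d`: the set `D`. -/
def Dcell {d : ℕ} (N : Set (ZZd d)) : Set (ZZd d) :=
  {i | voronoiCenter N i = voronoiCenter N 0}

/-- The vector `S = S_0` from the `N`-point of the cell of `0` to `0`. -/
noncomputable def Svec {d : ℕ} (N : Set (ZZd d)) : ZZd d := -(voronoiCenter N 0)

/-- The set `D° = S + D`. -/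
noncomputable def Dc {d : ℕ} (N : Set (ZZd d)) : Set (ZZd d) :=
  (fun i => Svec N + i) '' Dcell N

/-- Embedding `ℤ^d → ℝ^d`. -/
def toRd {d : ℕ} (i : ZZd d) : Rd d := fun k => (i k : ℝ)

/-- The support of a measure on `ℝ^d`. -/
def msupport {d : ℕ} (ξ : Measure (Rd d)) : Set (Rd d) :=
  {x | ∀ U : Set (Rd d), IsOpen U → x ∈ U → 0 < ξ U}

end LT
namespace LT

/-- The distribution function `F_μ(x) = μ(φ ≤ x)` of the pushforward `P_μ` of `μ`
under `φ`. -/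
noncomputable def cdf {d : ℕ} (μ : Measure (Rd d)) (φ : Rd d → ℝ) (x : ℝ) : ℝ :=
  (μ (φ ⁻¹' Set.Iic x)).toReal

/-- The (right-continuous) generalized inverse `F_μ⁻¹(v) = inf {x : F_μ(x) ≥ v}`. -/
noncomputable def cdfInv {d : ℕ} (μ : Measure (Rd d)) (φ : Rd d → ℝ) (v : ℝ) : ℝ :=
  sInf {x : ℝ | v ≤ cdf μ φ x}

/-- The map `ψ_r^μ = φ⁻¹(F_μ⁻¹(F_μ(φ(·)) + r mod 1))` of `[0,n)^d` to itself. -/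
noncomputable def psiMap {d : ℕ} (μ : Measure (Rd d)) (φ : Rd d → ℝ) (ψ : ℝ → Rd d)
    (r : ℝ) (s : Rd d) : Rd d :=
  ψ (cdfInv μ φ (Int.fract (cdf μ φ (φ s) + r)))

end LT

/-
Write `P = φ_* μ` and `F = cdf P`. Since `ψ ∘ φ = id` on the `μ`-conull box, `ψ_* P = μ`,
and since `φ` is injective there, `P` has no atoms; hence `F` is continuous and
`F (F⁻¹ v) = v` on `(0,1)`. Inverse transform sampling (`F⁻¹ v ≤ x ↔ v ≤ F x` for
`v ∈ (0,1)`) gives `F⁻¹_* U = P` for the uniform law `U` on `(0,1)`, and then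
`F_* P = (F ∘ F⁻¹)_* U = U`. The rotation `v ↦ v + r mod 1` preserves `U`, being a rotation
of `ℝ/ℤ`. Altogether
`(ψ_r^μ)_* μ = ψ_* F⁻¹_* (· + r mod 1)_* F_* φ_* μ = ψ_* F⁻¹_* U = ψ_* P = μ`.
-/

open Filter Topology

namespace ProbabilityTheory

section Quantile

variable (P : Measure ℝ)

/-- Only the values on `(0,1)` matter: elsewhere the set is empty or unbounded below and `sInf`
returns the junk value `0`. -/
noncomputable def quantile (v : ℝ) : ℝ := sInf {x | v ≤ cdf P x}

variable {P}

lemma bddBelow_setOf_le_cdf {v : ℝ} (hv : 0 < v) : BddBelow {x | v ≤ cdf P x} := by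
  obtain ⟨a, ha⟩ := eventually_atBot.1 ((tendsto_order.1 (tendsto_cdf_atBot P)).2 v hv)
  exact ⟨a, fun x hx => le_of_not_ge fun hxa => (ha x hxa).not_ge hx⟩

lemma nonempty_setOf_le_cdf {v : ℝ} (hv : v < 1) : {x | v ≤ cdf P x}.Nonempty :=
  (((tendsto_order.1 (tendsto_cdf_atTop P)).1 v hv).mono fun _ => le_of_lt).exists

lemma le_cdf_quantile {v : ℝ} (hv : v ∈ Ioo 0 1) : v ≤ cdf P (quantile P v) := by
  have hright : Tendsto (cdf P) (𝓝[>] quantile P v) (𝓝 (cdf P (quantile P v))) :=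
    ((cdf P).right_continuous _).mono Ioi_subset_Ici_self
  refine ge_of_tendsto hright (eventually_nhdsWithin_of_forall fun y hy => ?_)
  obtain ⟨x, hx, hxy⟩ := (csInf_lt_iff (bddBelow_setOf_le_cdf hv.1)
    (nonempty_setOf_le_cdf hv.2)).1 hy
  exact hx.trans (monotone_cdf P hxy.le)

lemma quantile_le_iff {v : ℝ} (hv : v ∈ Ioo 0 1) (x : ℝ) :
    quantile P v ≤ x ↔ v ≤ cdf P x :=
  ⟨fun h => (le_cdf_quantile hv).trans (monotone_cdf P h),
    fun h => csInf_le (bddBelow_setOf_le_cdf hv.1) h⟩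

lemma monotoneOn_quantile : MonotoneOn (quantile P) (Ioo 0 1) := fun _ ha _ hb hab =>
  (quantile_le_iff ha _).2 (hab.trans (le_cdf_quantile hb))

lemma aemeasurable_quantile : AEMeasurable (quantile P) (volume.restrict (Ioo 0 1)) :=
  aemeasurable_restrict_of_monotoneOn measurableSet_Ioo monotoneOn_quantile

lemma map_quantile [IsProbabilityMeasure P] :
    (volume.restrict (Ioo 0 1)).map (quantile P) = P := by
  refine Measure.ext_of_Iic _ _ fun x => ?_
  have hpre : quantile P ⁻¹' Iic x ∩ Ioo 0 1 = Ioo 0 1 ∩ Iic (cdf P x) := by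
    ext v
    simp only [mem_inter_iff, mem_preimage, mem_Iic]
    rw [and_comm]
    exact and_congr_right fun hv => quantile_le_iff hv x
  have hvol : volume (Ioo 0 1 ∩ Iic (cdf P x)) = ENNReal.ofReal (cdf P x) := by
    rw [measure_congr (Ioo_ae_eq_Ioc.inter (ae_eq_refl (Iic (cdf P x)))), Ioc_inter_Iic,
      min_eq_right (cdf_le_one P x), Real.volume_Ioc, sub_zero]
  rw [Measure.map_apply_of_aemeasurable aemeasurable_quantile measurableSet_Iic,
    Measure.restrict_apply' measurableSet_Ioo, hpre, hvol, ofReal_cdf]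

lemma continuous_cdf [IsProbabilityMeasure P] [NullSingletonClass P] : Continuous (cdf P) := by
  refine continuous_iff_continuousAt.2 fun x => continuousAt_iff_continuous_left'_right'.2
    ⟨?_, ((cdf P).right_continuous x).mono Ioi_subset_Ici_self⟩
  have hjump := (cdf P).measure_singleton x
  rw [measure_cdf, measure_singleton, eq_comm, ENNReal.ofReal_eq_zero, sub_nonpos] at hjump
  exact (monotone_cdf P).continuousWithinAt_Iio_iff_leftLim_eq.2
    (le_antisymm ((monotone_cdf P).leftLim_le le_rfl) hjump)

lemma cdf_quantile [IsProbabilityMeasure P] [NullSingletonClass P] {v : ℝ} (hv : v ∈ Ioo 0 1) :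
    cdf P (quantile P v) = v := by
  refine le_antisymm (le_of_not_gt fun hlt => ?_) (le_cdf_quantile hv)
  have hleft : ∀ᶠ y in 𝓝[<] quantile P v, v < cdf P y :=
    (continuous_cdf.continuousAt.tendsto.mono_left nhdsWithin_le_nhds).eventually
      (lt_mem_nhds hlt)
  obtain ⟨y, hvy, hyq⟩ := (hleft.and self_mem_nhdsWithin).exists
  exact (mem_Iio.1 hyq).not_ge ((quantile_le_iff hv y).2 hvy.le)

lemma measurePreserving_cdf [IsProbabilityMeasure P] [NullSingletonClass P] :
    MeasurePreserving (cdf P) P (volume.restrict (Ioo 0 1)) := by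
  refine ⟨(monotone_cdf P).measurable, ?_⟩
  calc P.map (cdf P) = ((volume.restrict (Ioo 0 1)).map (quantile P)).map (cdf P) := by
        rw [map_quantile]
    _ = (volume.restrict (Ioo 0 1)).map (cdf P ∘ quantile P) :=
        AEMeasurable.map_map_of_aemeasurable (monotone_cdf P).measurable.aemeasurable
          aemeasurable_quantile
    _ = volume.restrict (Ioo 0 1) := (Measure.map_congr ?_).trans Measure.map_id
  filter_upwards [ae_restrict_mem measurableSet_Ioo] with v hv
  exact cdf_quantile hv

end Quantile

end ProbabilityTheory

lemma measurePreserving_fract_add (r : ℝ) :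
    MeasurePreserving (fun v => Int.fract (v + r)) (volume.restrict (Ioo 0 1))
      (volume.restrict (Ioo 0 1)) := by
  -- Read through the projection `ℝ → ℝ/ℤ`, the map is the translation by `r`.
  let c : AddCircle (1 : ℝ) → ℝ := fun x => (AddCircle.equivIco 1 0 x : ℝ)
  have hc_mk (v : ℝ) : c v = Int.fract v := by simp [c]
  have hmk : MeasurePreserving ((↑) : ℝ → AddCircle (1 : ℝ))
      (volume.restrict (Ioo 0 1)) volume := by
    simpa [Measure.restrict_congr_set Ioo_ae_eq_Ioc] using AddCircle.measurePreserving_mk 1 0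
  have hc : MeasurePreserving c volume (volume.restrict (Ioo 0 1)) := by
    have hc_meas : Measurable c :=
      measurable_subtype_coe.comp (AddCircle.measurableEquivIco 1 0).measurable
    refine ⟨hc_meas, ?_⟩
    rw [← hmk.map_eq, Measure.map_map hc_meas hmk.measurable]
    refine (Measure.map_congr ?_).trans Measure.map_id
    filter_upwards [ae_restrict_mem measurableSet_Ioo] with v hv
    rw [Function.comp_apply, hc_mk, Int.fract_eq_self.2 ⟨hv.1.le, hv.2⟩, id]
  convert hc.comp ((measurePreserving_add_right volume (r : AddCircle (1 : ℝ))).comp hmk) using 1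
  funext v
  simp only [Function.comp_apply, ← AddCircle.coe_add, hc_mk]

section PushForward

variable {α β : Type*} [MeasurableSpace α] [MeasurableSpace β] {μ : Measure α} {f : α → β}
  {s : Set α}

lemma nullSingletonClass_map_of_injOn [MeasurableSingletonClass β] [NullSingletonClass μ]
    (hf : Measurable f) (hinj : InjOn f s) (hs : μ sᶜ = 0) : NullSingletonClass (μ.map f) where
  measure_singleton y := by
    rw [Measure.map_apply hf (measurableSet_singleton y), ← measure_inter_conull hs]
    have hsub : (f ⁻¹' {y} ∩ s).Subsingleton := fun _ ha _ hb =>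
      hinj ha.2 hb.2 (ha.1.trans hb.1.symm)
    exact hsub.measure_zero μ

lemma map_map_eq_self_of_leftInvOn {g : β → α} (hf : Measurable f) (hg : Measurable g)
    (hgf : LeftInvOn g f s) (hs : μ sᶜ = 0) : (μ.map f).map g = μ := by
  rw [Measure.map_map hg hf]
  refine (Measure.map_congr ?_).trans Measure.map_id
  filter_upwards [mem_ae_iff.2 hs] with x hx using hgf hx

end PushForward

namespace LT

open ProbabilityTheory (quantile aemeasurable_quantile map_quantile measurePreserving_cdf)

variable {d : ℕ} {μ : Measure (Rd d)} {φ : Rd d → ℝ}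

lemma cdf_eq_cdf_map [IsProbabilityMeasure μ] (hφ : Measurable φ) :
    cdf μ φ = ProbabilityTheory.cdf (μ.map φ) := by
  have := Measure.isProbabilityMeasure_map (μ := μ) hφ.aemeasurable
  funext x
  rw [ProbabilityTheory.cdf_eq_real, measureReal_def, Measure.map_apply hφ measurableSet_Iic]
  rfl

lemma psiMap_eq_comp [IsProbabilityMeasure μ] (hφ : Measurable φ) (ψ : ℝ → Rd d) (r : ℝ) :
    psiMap μ φ ψ r = ψ ∘ quantile (μ.map φ) ∘
      ((fun v => Int.fract (v + r)) ∘ ProbabilityTheory.cdf (μ.map φ) ∘ φ) := by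
  funext s
  simp only [psiMap, cdfInv, cdf_eq_cdf_map hφ]
  rfl

theorem psiMap_measure_preserving_general
    {d n : ℕ} (φ : Rd d → ℝ) (ψ : ℝ → Rd d)
    (hφ : Measurable φ) (hψ : Measurable ψ)
    (hinv : Set.InvOn ψ φ (boxN d n) (Set.Ico (0 : ℝ) 1))
    (μ : Measure (Rd d)) [IsProbabilityMeasure μ]
    (hconc : μ (boxN d n)ᶜ = 0)
    (hdiffuse : ∀ s, μ {s} = 0)
    (r : ℝ) :
    Measure.map (psiMap μ φ ψ r) μ = μ := by
  have : NullSingletonClass μ := ⟨hdiffuse⟩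
  set P := μ.map φ
  have : IsProbabilityMeasure P := Measure.isProbabilityMeasure_map hφ.aemeasurable
  have : NullSingletonClass P := nullSingletonClass_map_of_injOn hφ hinv.1.injOn hconc
  set T := (fun v => Int.fract (v + r)) ∘ ProbabilityTheory.cdf P ∘ φ
  have hT : MeasurePreserving T μ (volume.restrict (Ioo 0 1)) :=
    (measurePreserving_fract_add r).comp (measurePreserving_cdf.comp ⟨hφ, rfl⟩)
  have hQ : AEMeasurable (quantile P) (μ.map T) := by
    rw [hT.map_eq]
    exact aemeasurable_quantile
  calc μ.map (psiMap μ φ ψ r) = (μ.map (quantile P ∘ T)).map ψ := by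
        rw [psiMap_eq_comp hφ, AEMeasurable.map_map_of_aemeasurable hψ.aemeasurable
          (hQ.comp_measurable hT.measurable)]
    _ = ((μ.map T).map (quantile P)).map ψ := by
        rw [AEMeasurable.map_map_of_aemeasurable hQ hT.measurable.aemeasurable]
    _ = P.map ψ := by rw [hT.map_eq, map_quantile]
    _ = μ := map_map_eq_self_of_leftInvOn hφ hψ hinv.1 hconc

/-- **Example 1, second part.** With `φ`, `μ`, `F_μ`, `F_μ⁻¹` as before and `r ∈ [0,1)`,
the map `ψ_r^μ = φ⁻¹(F_μ⁻¹(F_μ(φ(·)) + r mod 1))` pushes `μ` forward to itself. -/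
theorem psiMap_measure_preserving
    {d n : ℕ} (hn : 0 < n) (φ : Rd d → ℝ) (ψ : ℝ → Rd d)
    (hφ : Measurable φ) (hψ : Measurable ψ)
    (hbij : Set.BijOn φ (boxN d n) (Set.Ico (0 : ℝ) 1))
    (hinv : Set.InvOn ψ φ (boxN d n) (Set.Ico (0 : ℝ) 1))
    (μ : Measure (Rd d)) [IsProbabilityMeasure μ]
    (hconc : μ (boxN d n)ᶜ = 0)
    (hdiffuse : ∀ s, μ {s} = 0)
    (r : ℝ) (hr : r ∈ Set.Ico (0 : ℝ) 1) :
    Measure.map (psiMap μ φ ψ r) μ = μ :=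
  psiMap_measure_preserving_general φ ψ hφ hψ hinv μ hconc hdiffuse r

end LT
end

section
/- Let ξ be a locally finite Borel measure on ℝ^d whose support has convex hull equal to all of ℝ^d. Let N := {i ∈ ℤ^d : ξ(i + [0,1)^d) > 0}, and partition ℤ^d into Voronoi cells by assigning each i ∈ ℤ^d to the point of N closest to i (choosing the lexicographically lowest point in case of ties). Then every Voronoi cell contains only finitely many points of ℤ^d. -/
open MeasureTheory ENNReal Set

/-!
If `i` lies in the cell of `j ∈ N`, then `|i - j|² ≤ |i - q|²` for every `q ∈ N`, i.e.
`2 ⟨i - j, q - j⟩ ≤ |q - j|²`. Since the support of `ξ` has convex hull `ℝ^d`, the `2d + 1` points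
`j` and `j ± (2d + 1) e_k` are convex combinations of finitely many support points, so every
linear functional `⟨v, ·⟩` exceeds `⟨v, j⟩ + (2d + 1) ‖v‖_∞` at one of them. Each support point is
within sup-distance `2` of a point of `N`, which costs at most `2d ‖v‖_∞`. This gives a finite set
of points `q ∈ N` with `⟨v, q - j⟩ ≥ ‖v‖_∞` for every `v`; taking `v = i - j` bounds `‖i - j‖_∞`
by `max |q - j|²`.
-/

namespace LT

lemma exists_finset_subset_of_subset_convexHull {𝕜 E : Type*} [Field 𝕜] [LinearOrder 𝕜]
    [IsStrictOrderedRing 𝕜] [AddCommGroup E] [Module 𝕜 E] {S : Set E} {T : Finset E}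
    (hT : ↑T ⊆ convexHull 𝕜 S) :
    ∃ F : Finset E, ↑F ⊆ S ∧ ↑T ⊆ convexHull 𝕜 (F : Set E) := by
  classical
  have hmem : ∀ t ∈ T, ∃ F : Finset E, ↑F ⊆ S ∧ t ∈ convexHull 𝕜 (F : Set E) := fun t ht => by
    simpa [convexHull_eq_union_convexHull_finite_subsets S] using hT ht
  choose! F hFS hF using hmem
  refine ⟨T.biUnion F, by simpa using hFS, fun t ht => ?_⟩
  exact convexHull_mono (Finset.coe_subset.2 (Finset.subset_biUnion_of_mem F ht)) (hF t ht)

lemma abs_dotProduct_le {ι : Type*} [Fintype ι] (v w : ι → ℝ) :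
    |v ⬝ᵥ w| ≤ Fintype.card ι * (‖v‖ * ‖w‖) :=
  calc |v ⬝ᵥ w| ≤ ∑ k, |v k * w k| := Finset.abs_sum_le_sum_abs _ _
    _ ≤ ∑ _k : ι, ‖v‖ * ‖w‖ := Finset.sum_le_sum fun k _ => by
        rw [abs_mul]
        exact mul_le_mul (norm_le_pi_norm v k) (norm_le_pi_norm w k) (abs_nonneg _)
          (norm_nonneg _)
    _ = Fintype.card ι * (‖v‖ * ‖w‖) := by simp

lemma exists_finset_forall_exists_mul_norm_le_dotProduct {ι : Type*} [Fintype ι]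
    [DecidableEq ι] {S : Set (ι → ℝ)} (hS : convexHull ℝ S = univ) (c : ι → ℝ) {r : ℝ}
    (hr : 0 ≤ r) :
    ∃ F : Finset (ι → ℝ), ↑F ⊆ S ∧ ∀ v : ι → ℝ, ∃ p ∈ F, r * ‖v‖ ≤ v ⬝ᵥ (p - c) := by
  obtain ⟨F, hFS, hTF⟩ := exists_finset_subset_of_subset_convexHull (S := S)
    (T := insert c (Finset.univ.biUnion fun k => {c + Pi.single k r, c - Pi.single k r}))
    (by rw [hS]; exact subset_univ _)
  have hcF : c ∈ convexHull ℝ (F : Set (ι → ℝ)) := hTF (by simp)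
  have hF : F.Nonempty := Finset.coe_nonempty.1 (convexHull_nonempty_iff.1 ⟨c, hcF⟩)
  refine ⟨F, hFS, fun v => ?_⟩
  have hle : ∀ x ∈ convexHull ℝ (F : Set (ι → ℝ)), v ⬝ᵥ x ≤ F.sup' hF (v ⬝ᵥ ·) := fun x hx =>
    ((dotProductBilin ℝ ℝ v).convexOn convex_univ).le_sup_of_mem_convexHull (subset_univ _) hx
  obtain ⟨p, hpF, hp⟩ := F.exists_mem_eq_sup' hF (v ⬝ᵥ ·)
  refine ⟨p, hpF, ?_⟩
  rw [dotProduct_sub, ← hp, ← norm_smul_of_nonneg hr]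
  refine (pi_norm_le_iff_of_nonneg (sub_nonneg.2 (hle c hcF))).2 fun k => ?_
  have hT : ∀ x ∈ ({c + Pi.single k r, c - Pi.single k r} : Finset (ι → ℝ)),
      x ∈ convexHull ℝ (F : Set (ι → ℝ)) := fun x hx =>
    hTF (Finset.mem_insert_of_mem (Finset.mem_biUnion.2 ⟨k, Finset.mem_univ k, hx⟩))
  have hplus := hle _ (hT _ (Finset.mem_insert_self _ _))
  have hminus := hle _ (hT _ (Finset.mem_insert_of_mem (Finset.mem_singleton_self _)))
  rw [dotProduct_add, dotProduct_single] at hplus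
  rw [dotProduct_sub, dotProduct_single] at hminus
  rw [Pi.smul_apply, smul_eq_mul, Real.norm_eq_abs, abs_le']
  constructor <;> linarith

section Lattice

variable {d : ℕ}

lemma floor_mem_cube (x : Rd d) : x ∈ cube (fun k => ⌊x k⌋) :=
  fun k => ⟨Int.floor_le (x k), Int.lt_floor_add_one (x k)⟩

lemma dist_toRd_lt_one_of_mem_cube {i : ZZd d} {x : Rd d} (hx : x ∈ cube i) :
    dist (toRd i) x < 1 := by
  refine (dist_pi_lt_iff one_pos).2 fun k => ?_
  rw [Real.dist_eq, abs_sub_lt_iff, toRd]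
  constructor <;> linarith [(hx k).1, (hx k).2]

lemma exists_mem_Npts_dist_lt_two {ξ : Measure (Rd d)} {x : Rd d} (hx : x ∈ msupport ξ) :
    ∃ i ∈ Npts ξ, dist (toRd i) x < 2 := by
  have hball : ξ (Metric.ball x 1) ≠ 0 :=
    (hx _ Metric.isOpen_ball (Metric.mem_ball_self one_pos)).ne'
  have hcover : Metric.ball x 1 ⊆ ⋃ i, Metric.ball x 1 ∩ cube i := fun y hy =>
    mem_iUnion.2 ⟨_, hy, floor_mem_cube y⟩
  obtain ⟨i, hi⟩ : ∃ i, ξ (Metric.ball x 1 ∩ cube i) ≠ 0 := by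
    by_contra! h
    exact hball (measure_mono_null hcover (measure_iUnion_null h))
  obtain ⟨y, hyx, hyi⟩ := nonempty_of_measure_ne_zero hi
  refine ⟨i, pos_iff_ne_zero.2 fun h => hi (measure_mono_null inter_subset_right h), ?_⟩
  calc dist (toRd i) x ≤ dist (toRd i) y + dist y x := dist_triangle _ _ _
    _ < 1 + 1 := add_lt_add (dist_toRd_lt_one_of_mem_cube hyi) hyx
    _ = 2 := one_add_one_eq_two

lemma sqdist_nonneg (i j : ZZd d) : 0 ≤ sqdist i j :=
  Finset.sum_nonneg fun _ _ => sq_nonneg _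

lemma sqdist_sub_sqdist (i j q : ZZd d) :
    sqdist i q - sqdist i j = sqdist q j - 2 * ((i - j) ⬝ᵥ (q - j)) := by
  simp only [sqdist, dotProduct, Finset.mul_sum, ← Finset.sum_sub_distrib, Pi.sub_apply]
  exact Finset.sum_congr rfl fun _ _ => by ring

lemma voronoiCenter_eq_or_forall_sqdist_le {N : Set (ZZd d)} {i j : ZZd d}
    (h : voronoiCenter N i = j) : i = j ∨ ∀ q ∈ N, sqdist i j ≤ sqdist i q := by
  unfold voronoiCenter at h
  split at h
  · next hex => exact .inr (h ▸ hex.choose_spec.2.1)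
  · exact .inl h

def Surrounds (N : Set (ZZd d)) (j : ZZd d) (B : ℤ) : Prop :=
  ∀ v : ZZd d, ∃ q ∈ N, sqdist q j ≤ B ∧ ∀ k, |v k| ≤ v ⬝ᵥ (q - j)

lemma Surrounds.abs_sub_le {N : Set (ZZd d)} {j : ZZd d} {B : ℤ} (hN : Surrounds N j B)
    {i : ZZd d} (hi : voronoiCenter N i = j) (k : Fin d) : |i k - j k| ≤ B := by
  obtain ⟨q, hqN, hqB, hq⟩ := hN (i - j)
  have hq0 := sqdist_nonneg q j
  rcases voronoiCenter_eq_or_forall_sqdist_le hi with rfl | hmin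
  · simpa using hq0.trans hqB
  · have hvor := hmin q hqN
    have hid := sqdist_sub_sqdist i j q
    have hqk := hq k
    rw [Pi.sub_apply] at hqk
    linarith [abs_nonneg (i k - j k)]

lemma Surrounds.finite_setOf_voronoiCenter_eq {N : Set (ZZd d)} {j : ZZd d} {B : ℤ}
    (hN : Surrounds N j B) : {i | voronoiCenter N i = j}.Finite :=
  (Set.finite_Icc (j - fun _ => B) (j + fun _ => B)).subset fun i hi =>
    ⟨fun k => by linarith [(abs_le.1 (hN.abs_sub_le hi k)).1, Pi.sub_apply j (fun _ => B) k],
     fun k => by linarith [(abs_le.1 (hN.abs_sub_le hi k)).2, Pi.add_apply j (fun _ => B) k]⟩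

lemma exists_surrounds_Npts {ξ : Measure (Rd d)} (hconv : convexHull ℝ (msupport ξ) = univ)
    (j : ZZd d) : ∃ B, Surrounds (Npts ξ) j B := by
  classical
  obtain ⟨F, hFS, hF⟩ := exists_finset_forall_exists_mul_norm_le_dotProduct hconv (toRd j)
    (r := 2 * d + 1) (by positivity)
  choose! g hgN hg using fun x (hx : x ∈ msupport ξ) => exists_mem_Npts_dist_lt_two hx
  obtain ⟨B, hB⟩ := (F.image fun p => sqdist (g p) j).exists_le
  refine ⟨B, fun v => ?_⟩
  obtain ⟨p, hpF, hp⟩ := hF (toRd v)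
  refine ⟨g p, hgN p (hFS hpF), hB _ (Finset.mem_image_of_mem _ hpF), fun k => ?_⟩
  have hcast : ((v ⬝ᵥ (g p - j) : ℤ) : ℝ) = toRd v ⬝ᵥ (toRd (g p) - toRd j) := by
    simp [toRd, dotProduct]
  have hsplit : toRd v ⬝ᵥ (toRd (g p) - toRd j)
      = toRd v ⬝ᵥ (p - toRd j) + toRd v ⬝ᵥ (toRd (g p) - p) := by
    rw [← dotProduct_add, sub_add_sub_cancel']
  have hperturb : |toRd v ⬝ᵥ (toRd (g p) - p)| ≤ d * (‖toRd v‖ * 2) := by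
    refine (abs_dotProduct_le _ _).trans ?_
    rw [Fintype.card_fin, ← dist_eq_norm]
    gcongr
    exact (hg p (hFS hpF)).le
  have hk : |(v k : ℝ)| ≤ ‖toRd v‖ := norm_le_pi_norm (toRd v) k
  have : ((|v k| : ℤ) : ℝ) ≤ ((v ⬝ᵥ (g p - j) : ℤ) : ℝ) := by
    rw [hcast, hsplit, Int.cast_abs]
    linarith [(abs_le.1 hperturb).1]
  exact_mod_cast this

end Lattice

theorem voronoi_cells_finite_general {d : ℕ} (ξm : Measure (Rd d))
    (hconv : convexHull ℝ (msupport ξm) = Set.univ) :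
    ∀ j : ZZd d, {i : ZZd d | voronoiCenter (Npts ξm) i = j}.Finite := fun j =>
  (exists_surrounds_Npts hconv j).elim fun _ hB => hB.finite_setOf_voronoiCenter_eq

/-- If `ξ` is a locally finite Borel measure on `ℝ^d` whose support has convex hull all of
`ℝ^d`, then every Voronoi cell of the point process
`N = {i ∈ ℤ^d : ξ(i + [0,1)^d) > 0}` (with the nearest-point, lex-lowest-tie-break
assignment) contains only finitely many points of `ℤ^d`. -/
theorem voronoi_cells_finite {d : ℕ} (ξm : Measure (Rd d)) [IsLocallyFiniteMeasure ξm]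
    (hconv : convexHull ℝ (msupport ξm) = Set.univ) :
    ∀ j : ZZd d, {i : ZZd d | voronoiCenter (Npts ξm) i = j}.Finite :=
  voronoi_cells_finite_general ξm hconv

end LT
end

section
/- Let Y° be a stationary independent background under P°, let π be a measurable map taking (Y°, X°, ξ°) to a point of ℝ^d with induced allocation τ(y, X°, ξ°, s) := s + π(θ_s(y, X°, ξ°)), and let C be a measurable subset of the path space of Y° with 0 < P°(Y° ∈ C) < ∞. Define the kernel K_{π,C}(X°, ξ°, s, B) := P°(Y° ∈ C)^{-1} ∫ 1{τ(y, X°, ξ°, s) ∈ B, θ_{τ(y, X°, ξ°, s)} y ∈ C} P°(Y° ∈ dy) for Borel B ⊆ ℝ^d and s ∈ ℝ^d. Then K_{π,C} is invariant: K_{π,C}(θ_s(X°, ξ°), 0, B − s) = K_{π,C}(X°, ξ°, s, B) for all s ∈ ℝ^d and Borel B. -/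
open MeasureTheory ENNReal Set

namespace LT

/-- The allocation `τ(y, x, ξ, s) = s + π(θ_s(y, x, ξ))` induced by `π` and a
background. -/
noncomputable def allocBG {d : ℕ} {E G : Type*} [MeasurableSpace E] [MeasurableSpace G]
    (A : Action d G) (Θ : Action d E) (π : G × E × Measure (Rd d) → Rd d)
    (y : G) (x : E) (ξm : Measure (Rd d)) (s : Rd d) : Rd d :=
  s + π (A.act s y, Θ.act s x, shiftM s ξm)

/-- The weighted transport kernel
`K_{π,C}(x, ξ, s, B) = P°(Y°∈C)⁻¹ ∫ 1{τ(y,x,ξ,s) ∈ B, θ_{τ(y,x,ξ,s)} y ∈ C} P°(Y°∈dy)`,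
where `ν = P°(Y° ∈ ·)` is the distribution of the background. -/
noncomputable def Kker {d : ℕ} {E G : Type*} [MeasurableSpace E] [MeasurableSpace G]
    (A : Action d G) (Θ : Action d E) (ν : Measure G)
    (π : G × E × Measure (Rd d) → Rd d) (C : Set G)
    (x : E) (ξm : Measure (Rd d)) (s : Rd d) (B : Set (Rd d)) : ℝ≥0∞ :=
  (ν C)⁻¹ *
    ν {y | allocBG A Θ π y x ξm s ∈ B ∧ A.act (allocBG A Θ π y x ξm s) y ∈ C}

end LT
namespace LT

/-- **Kernel invariance (Section 9, (11)).** For a stationary independent background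
with distribution `ν`, a measurable `π` and a set `C` of paths with
`0 < P°(Y°∈C) < ∞`, the weighted transport kernel `K_{π,C}` is invariant:
`K_{π,C}(θ_s(X°,ξ°), 0, B - s) = K_{π,C}(X°,ξ°, s, B)`. -/
theorem kernel_invariant
    {d : ℕ} {Ω E G : Type*} [MeasurableSpace Ω] [MeasurableSpace E] [MeasurableSpace G]
    (Θ : Action d E) (A : Action d G) (Pc : Measure Ω) [SigmaFinite Pc]
    (Xc : Ω → E) (ξc : Ω → Measure (Rd d))
    (hXc : Measurable Xc) (hξc : Measurable ξc)
    (ν : Measure G) [IsProbabilityMeasure ν]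
    (hνstat : ∀ t : Rd d, Measure.map (A.act t) ν = ν)
    (π : G × E × Measure (Rd d) → Rd d) (hπ : Measurable π)
    (C : Set G) (hC : MeasurableSet C) (hCpos : 0 < ν C) (hCfin : ν C < ⊤) :
    ∀ (x : E) (ξm : Measure (Rd d)) (s : Rd d) (B : Set (Rd d)), MeasurableSet B →
      Kker A Θ ν π C (Θ.act s x) (shiftM s ξm) 0 ((· + s) ⁻¹' B)
        = Kker A Θ ν π C x ξm s B := by
  intro x ξm s B hB
  have hinv : ∀ y, A.act (-s) (A.act s y) = y := fun y => by
    rw [A.act_add, neg_add_cancel, A.act_zero]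
  have hinv' : ∀ y, A.act s (A.act (-s) y) = y := fun y => by
    rw [A.act_add, add_neg_cancel, A.act_zero]
  let e : G ≃ᵐ G :=
    { toFun := A.act s, invFun := A.act (-s),
      left_inv := hinv, right_inv := hinv',
      measurable_toFun := A.measurable_act s,
      measurable_invFun := A.measurable_act (-s) }
  have hmap : ∀ S : Set G, ν S = ν (A.act s ⁻¹' S) := by
    intro S
    conv_lhs => rw [← hνstat s]
    exact MeasurableEquiv.map_apply e S
  have hsh : shiftM 0 (shiftM s ξm) = shiftM s ξm := by
    have : (fun x : Rd d => x - 0) = id := by funext x; simp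
    simp [shiftM, this, Measure.map_id]
  unfold Kker
  congr 1
  rw [hmap]
  congr 1
  ext y
  simp only [Set.mem_preimage, Set.mem_setOf_eq, allocBG, A.act_zero, Θ.act_zero, hsh,
    zero_add, A.act_add]
  rw [add_comm s (π (A.act s y, Θ.act s x, shiftM s ξm))]

end LT
end

section
/- Let ξ̂ := ξ°⊗λ₁ be the extension of ξ° to ℝ^{d+1} and let π be a preserving shift for ξ̂, i.e. the induced allocation τ on ℝ^{d+1} satisfies ∬ 1{τ(X°, ξ̂, (s,u)) ∈ B × C} ξ°(ds) du = ξ°(B) λ₁(C) for all Borel B ⊆ ℝ^d and Borel C ⊆ ℝ. For a Borel set C ⊆ ℝ with 0 < λ₁(C) < ∞, define K_{π,C}(X°, ξ°, s, B) := λ₁(C)^{-1} ∫ 1{τ(X°, ξ̂, (s,u)) ∈ B × C} du. Then K_{π,C} is an invariant kernel, i.e. K_{π,C}(θ_s(X°, ξ°), 0, B − s) = K_{π,C}(X°, ξ°, s, B), and K_{π,C} preserves ξ°, i.e. ∫ K_{π,C}(X°, ξ°, s, B) ξ°(ds) = ξ°(B) for all Borel B ⊆ ℝ^d. -/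
open MeasureTheory ENNReal Set

namespace LT

/-- The extension `ξ ⊗ λ₁` of a measure on `ℝ^d` to a measure on `ℝ^{d+1}`. -/
noncomputable def extendM {d : ℕ} (ξm : Measure (Rd d)) : Measure (Rd (d + 1)) :=
  Measure.map (fun p : Rd d × ℝ => Fin.snoc p.1 p.2) (ξm.prod volume)

/-- Extension of an `ℝ^d`-action on `E` to an `ℝ^{d+1}`-action through the first `d`
coordinates: `θ_{(t₁,…,t_{d+1})} x = θ_{(t₁,…,t_d)} x`. -/
noncomputable def extAction {d : ℕ} {E : Type*} [MeasurableSpace E] (Θ : Action d E) :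
    Action (d + 1) E where
  act t x := Θ.act (fun k => t k.castSucc) x
  measurable_act t := Θ.measurable_act _
  act_zero x := by
    show Θ.act (fun k : Fin d => (0 : Rd (d + 1)) k.castSucc) x = x
    have h : (fun k : Fin d => (0 : Rd (d + 1)) k.castSucc) = (0 : Rd d) := rfl
    rw [h, Θ.act_zero]
  act_add s t x := by
    show Θ.act _ (Θ.act _ x) = Θ.act _ x
    rw [Θ.act_add]
    congr 1

end LT
namespace LT

/-- The allocation `τ(x, ξ̂, v) = v + π(θ_v(x, ξ̂))` on `ℝ^{d+1}`. -/
noncomputable def allocExt {d : ℕ} {E : Type*} [MeasurableSpace E] (Θ : Action d E)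
    (π : E × Measure (Rd (d + 1)) → Rd (d + 1)) (x : E)
    (ξhat : Measure (Rd (d + 1))) (v : Rd (d + 1)) : Rd (d + 1) :=
  v + π ((extAction Θ).act v x, shiftM v ξhat)

/-- The product set `B × C ⊆ ℝ^{d+1}` of `B ⊆ ℝ^d` and `C ⊆ ℝ`. -/
def prodSet {d : ℕ} (B : Set (Rd d)) (C : Set ℝ) : Set (Rd (d + 1)) :=
  {w | (fun k => w k.castSucc) ∈ B ∧ w (Fin.last d) ∈ C}

/-- The kernel `K_{π,C}(x, ξ, s, B) = λ₁(C)⁻¹ ∫ 1{τ(x, ξ̂, (s,u)) ∈ B × C} du` with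
`ξ̂ = ξ ⊗ λ₁`. -/
noncomputable def Kext {d : ℕ} {E : Type*} [MeasurableSpace E] (Θ : Action d E)
    (π : E × Measure (Rd (d + 1)) → Rd (d + 1)) (C : Set ℝ)
    (x : E) (ξm : Measure (Rd d)) (s : Rd d) (B : Set (Rd d)) : ℝ≥0∞ :=
  (volume C)⁻¹ *
    volume {u : ℝ | allocExt Θ π x (extendM ξm) (Fin.snoc s u) ∈ prodSet B C}


lemma measurable_snocF {d : ℕ} :
    Measurable (fun p : Rd d × ℝ => (Fin.snoc p.1 p.2 : Rd (d + 1))) := by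
  apply measurable_pi_lambda
  intro k
  refine Fin.lastCases ?_ ?_ k
  · simp only [Fin.snoc_last]; exact measurable_snd
  · intro i; simp only [Fin.snoc_castSucc]
    exact (measurable_pi_apply i).comp measurable_fst

lemma snoc_sub_snoc {d : ℕ} (x s : Rd d) (b c : ℝ) :
    (Fin.snoc x b : Rd (d + 1)) - Fin.snoc s c = Fin.snoc (x - s) (b - c) := by
  funext k
  refine Fin.lastCases ?_ ?_ k
  · simp [Pi.sub_apply]
  · intro i; simp [Pi.sub_apply]

lemma snoc_add_snoc {d : ℕ} (x s : Rd d) (b c : ℝ) :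
    (Fin.snoc x b : Rd (d + 1)) + Fin.snoc s c = Fin.snoc (x + s) (b + c) := by
  funext k
  refine Fin.lastCases ?_ ?_ k
  · simp [Pi.add_apply]
  · intro i; simp [Pi.add_apply]

lemma shiftM_shiftM {n : ℕ} (a b : Rd n) (ξ : Measure (Rd n)) :
    shiftM a (shiftM b ξ) = shiftM (b + a) ξ := by
  have ha : Measurable fun x : Rd n => x - a := measurable_id.sub measurable_const
  have hb : Measurable fun x : Rd n => x - b := measurable_id.sub measurable_const
  unfold shiftM
  rw [Measure.map_map ha hb]
  congr 1
  funext x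
  simp [Function.comp, sub_sub]

lemma extendM_shiftM {d : ℕ} (s : Rd d) (ξm : Measure (Rd d)) :
    extendM (shiftM s ξm) = shiftM (Fin.snoc s 0) (extendM ξm) := by
  ext A hA
  have hms : Measurable (fun x : Rd d => x - s) := measurable_id.sub measurable_const
  have hmt : Measurable (fun w : Rd (d+1) => w - Fin.snoc s (0:ℝ)) :=
    measurable_id.sub measurable_const
  have hS : MeasurableSet
      ((fun p : Rd d × ℝ => (Fin.snoc p.1 p.2 : Rd (d+1))) ⁻¹' A) := measurable_snocF hA
  have hT : MeasurableSet ((fun w : Rd (d+1) => w - Fin.snoc s (0:ℝ)) ⁻¹' A) := hmt hA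
  have hST : MeasurableSet ((fun p : Rd d × ℝ => (Fin.snoc p.1 p.2 : Rd (d+1))) ⁻¹'
      ((fun w : Rd (d+1) => w - Fin.snoc s (0:ℝ)) ⁻¹' A)) := measurable_snocF hT
  have hrhs : shiftM (Fin.snoc s (0:ℝ)) (extendM ξm) A
      = extendM ξm ((fun w : Rd (d+1) => w - Fin.snoc s (0:ℝ)) ⁻¹' A) :=
    Measure.map_apply hmt hA
  rw [hrhs, extendM, extendM, Measure.map_apply measurable_snocF hT,
    Measure.map_apply measurable_snocF hA, Measure.prod_apply hST,
    Measure.prod_apply hS, shiftM,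
    lintegral_map (measurable_measure_prodMk_left hS) hms]
  refine lintegral_congr fun x => ?_
  congr 1
  ext b
  simp only [Set.mem_preimage, snoc_sub_snoc, sub_zero]

/-- **Section 9, (14).** If `π` is a preserving shift for `ξ̂ = ξ°⊗λ₁`, then for every
Borel `C ⊆ ℝ` with `0 < λ₁(C) < ∞` the kernel `K_{π,C}` is invariant,
`K_{π,C}(θ_s(X°,ξ°), 0, B-s) = K_{π,C}(X°,ξ°,s,B)`, and preserves `ξ°`,
`∫ K_{π,C}(X°,ξ°,s,B) ξ°(ds) = ξ°(B)`. -/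
theorem extension_kernel_invariant_and_preserving
    {d : ℕ} {Ω E : Type*} [MeasurableSpace Ω] [MeasurableSpace E]
    (Θ : Action d E) (Pc : Measure Ω) [SigmaFinite Pc]
    (Xc : Ω → E) (ξc : Ω → Measure (Rd d))
    (hXc : Measurable Xc) (hξc : Measurable ξc)
    (π : E × Measure (Rd (d + 1)) → Rd (d + 1)) (hπ : Measurable π)
    (hpres : ∀ (x : E) (ξm : Measure (Rd d)),
      ∀ (B : Set (Rd d)) (C : Set ℝ), MeasurableSet B → MeasurableSet C →
        ∫⁻ s, volume {u : ℝ | allocExt Θ π x (extendM ξm) (Fin.snoc s u) ∈ prodSet B C}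
            ∂ξm = ξm B * volume C) :
    ∀ (C : Set ℝ), MeasurableSet C → 0 < volume C → volume C < ⊤ →
      ∀ (x : E) (ξm : Measure (Rd d)),
        (∀ (s : Rd d) (B : Set (Rd d)), MeasurableSet B →
          Kext Θ π C (Θ.act s x) (shiftM s ξm) 0 ((· + s) ⁻¹' B)
            = Kext Θ π C x ξm s B)
        ∧ (∀ B : Set (Rd d), MeasurableSet B →
            ∫⁻ s, Kext Θ π C x ξm s B ∂ξm = ξm B) := by
  intro C hC hC0 hCtop x ξm
  constructor
  · intro s B hB
    unfold Kext
    congr 2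
    ext u
    simp only [Set.mem_setOf_eq]
    have hA1 : (extAction Θ).act (Fin.snoc (0:Rd d) u) (Θ.act s x) = Θ.act s x := by
      show Θ.act (fun k : Fin d => (Fin.snoc (0:Rd d) u : Rd (d+1)) k.castSucc)
        (Θ.act s x) = Θ.act s x
      have h0 : (fun k : Fin d => (Fin.snoc (0:Rd d) u : Rd (d+1)) k.castSucc)
          = (0 : Rd d) := by
        funext k; simp [Fin.snoc_castSucc]
      rw [h0, Θ.act_add, zero_add]
    have hA2 : (extAction Θ).act (Fin.snoc s u) x = Θ.act s x := by
      show Θ.act (fun k : Fin d => (Fin.snoc s u : Rd (d+1)) k.castSucc) x = Θ.act s x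
      have h0 : (fun k : Fin d => (Fin.snoc s u : Rd (d+1)) k.castSucc) = s := by
        funext k; simp [Fin.snoc_castSucc]
      rw [h0]
    have hM : shiftM (Fin.snoc (0:Rd d) u) (extendM (shiftM s ξm))
        = shiftM (Fin.snoc s u) (extendM ξm) := by
      rw [extendM_shiftM, shiftM_shiftM, snoc_add_snoc, add_zero, zero_add]
    have hsub : (Fin.snoc s u : Rd (d+1)) - Fin.snoc s 0 = Fin.snoc (0:Rd d) u := by
      rw [snoc_sub_snoc]; simp
    have halloc : allocExt Θ π (Θ.act s x) (extendM (shiftM s ξm)) (Fin.snoc 0 u)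
        = allocExt Θ π x (extendM ξm) (Fin.snoc s u) - Fin.snoc s (0:ℝ) := by
      unfold allocExt
      rw [hA1, hA2, hM, ← hsub]
      abel
    rw [halloc]
    set w := allocExt Θ π x (extendM ξm) (Fin.snoc s u) with hw
    simp only [prodSet, Set.mem_setOf_eq, Set.mem_preimage]
    have h1 : (fun k : Fin d => (w - (Fin.snoc s 0 : Rd (d+1))) k.castSucc) + s
        = fun k : Fin d => w k.castSucc := by
      funext k; simp [Pi.add_apply, Pi.sub_apply, Fin.snoc_castSucc]
    have h2 : (w - (Fin.snoc s 0 : Rd (d+1))) (Fin.last d) = w (Fin.last d) := by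
      simp [Pi.sub_apply]
    rw [h1, h2]
  · intro B hB
    unfold Kext
    rw [lintegral_const_mul' _ _ (ENNReal.inv_ne_top.2 hC0.ne'), hpres x ξm B C hB hC,
      mul_comm (ξm B), ← mul_assoc, ENNReal.inv_mul_cancel hC0.ne' hCtop.ne, one_mul]


end LT
end
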